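/- Let F = f + g with f convex and L-smooth and g proper convex lsc, with nonempty optimal set Ω_* and optimal value F_*. Suppose F satisfies the HEB on S_{ε₀} with exponent θ ∈ (0, 1/2] and constant c, and F(x₀) − F_* ≤ ε₀. Consider the restarted proximal gradient scheme: stage k runs t_k = ⌈c²L ε_{k−1}^{2θ−1}⌉ proximal gradient steps with step size 1/L starting from x_{k−1}, producing x_k, where ε_k = ε₀/2^k. Then F(x_k) − F_* ≤ ε_k for all k ≥ 0. -/

import Mathlib

/-!
A proximal gradient step `x ↦ x⁺` satisfies the three-point inequality
`F(x⁺) + L/2‖x⁺ - z‖² ≤ F(z) + L/2‖x - z‖²` for every `z`: add the descent lemma for `f`, the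
gradient inequality of convex `f` at `x`, and the optimality condition of the prox step.
Telescoping gives the sublinear rate `t (F(Tᵗ x) - F_*) ≤ L/2 · dist(x, Ω_*)²`. At a restart with
gap at most `ε`, the HEB bounds `dist(x, Ω_*)²` by `c² ε^{2θ}`, so after `t ≥ c² L ε^{2θ-1}` steps
the gap is at most `L c² ε^{2θ} / (2t) ≤ ε / 2`.
-/

open RealInnerProductSpace AffineMap Filter Topology

lemma le_of_forall_le_add_mul {a b c : ℝ} (h : ∀ t ∈ Set.Ioc (0 : ℝ) 1, a ≤ b + t * c) :
    a ≤ b := by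
  have hlim : Tendsto (fun t : ℝ => b + t * c) (𝓝[>] 0) (𝓝 b) :=
    ((by fun_prop : Continuous fun t : ℝ => b + t * c).tendsto' 0 b (by simp)).mono_left
      nhdsWithin_le_nhds
  refine ge_of_tendsto hlim ?_
  filter_upwards [Ioc_mem_nhdsGT zero_lt_one] using h

section

variable {E : Type*} [NormedAddCommGroup E] [InnerProductSpace ℝ E]

lemma inner_sub_le_of_forall_half_sq_add_le {h : E → ℝ} (hh : ConvexOn ℝ Set.univ h) {u y : E}
    (hmin : ∀ w, 1 / 2 * ‖y - u‖ ^ 2 + h y ≤ 1 / 2 * ‖w - u‖ ^ 2 + h w) (z : E) :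
    ⟪u - y, z - y⟫ ≤ h z - h y := by
  -- compare `y` with the points of the segment from `y` to `z`, then let them tend to `y`
  refine le_of_forall_le_add_mul (c := 1 / 2 * ‖z - y‖ ^ 2) fun t ht => ?_
  have hnorm : ‖lineMap y z t - u‖ ^ 2
      = ‖y - u‖ ^ 2 - 2 * t * ⟪u - y, z - y⟫ + t ^ 2 * ‖z - y‖ ^ 2 := by
    rw [lineMap_apply_module', show t • (z - y) + y - u = t • (z - y) - (u - y) by abel,
      norm_sub_sq_real, real_inner_smul_left, norm_smul, mul_pow, Real.norm_eq_abs, sq_abs,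
      norm_sub_rev u y, real_inner_comm]
    ring
  have hconv : h (lineMap y z t) ≤ (1 - t) * h y + t * h z := by
    simpa [lineMap_apply_module] using
      hh.2 (Set.mem_univ y) (Set.mem_univ z) (sub_nonneg.2 ht.2) ht.1.le (by ring)
  have hscaled : t * ⟪u - y, z - y⟫ ≤ t * (h z - h y + t * (1 / 2 * ‖z - y‖ ^ 2)) := by
    nlinarith [hmin (lineMap y z t)]
  linarith [le_of_mul_le_mul_left hscaled ht.1]

variable [CompleteSpace E]

lemma HasGradientAt.hasDerivAt_comp_lineMap {f : E → ℝ} {g x y : E} {t : ℝ}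
    (hf : HasGradientAt f g (lineMap x y t)) :
    HasDerivAt (fun s => f (lineMap x y s)) ⟪g, y - x⟫ t := by
  have := hf.hasFDerivAt.comp_hasDerivAt t hasDerivAt_lineMap
  rw [InnerProductSpace.toDual_apply_apply] at this
  exact this

lemma ConvexOn.add_inner_le_of_hasGradientAt {f : E → ℝ} (hf : ConvexOn ℝ Set.univ f)
    {g x : E} (hg : HasGradientAt f g x) (z : E) : f x + ⟪g, z - x⟫ ≤ f z := by
  have hline : ConvexOn ℝ Set.univ (fun t : ℝ => f (lineMap x z t)) :=
    hf.comp_affineMap (lineMap x z)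
  have := hline.le_slope_of_hasDerivAt (Set.mem_univ (0 : ℝ)) (Set.mem_univ 1) zero_lt_one
    (HasGradientAt.hasDerivAt_comp_lineMap (by simpa using hg))
  simp only [slope, sub_zero, inv_one, lineMap_apply_one, lineMap_apply_zero, vsub_eq_sub,
    smul_eq_mul, one_mul] at this
  linarith

lemma le_add_inner_add_sq_of_lipschitz_gradient {f : E → ℝ} {f' : E → E} {L : ℝ}
    (hgrad : ∀ x, HasGradientAt f (f' x) x) (hlip : ∀ x y, ‖f' x - f' y‖ ≤ L * ‖x - y‖)
    (x y : E) : f y ≤ f x + ⟪f' x, y - x⟫ + L / 2 * ‖y - x‖ ^ 2 := by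
  -- `ψ` is antitone on `[0, 1]`, since the Lipschitz bound makes its derivative nonpositive
  set ψ : ℝ → ℝ := fun t => f (lineMap x y t) - t * ⟪f' x, y - x⟫ - L / 2 * t ^ 2 * ‖y - x‖ ^ 2
  have hψ : ∀ t, HasDerivAt ψ
      (⟪f' (lineMap x y t), y - x⟫ - ⟪f' x, y - x⟫ - L * t * ‖y - x‖ ^ 2) t := by
    intro t
    have hline := (hgrad (lineMap x y t)).hasDerivAt_comp_lineMap
    have hquad := ((hasDerivAt_pow 2 t).const_mul (L / 2)).mul_const (‖y - x‖ ^ 2)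
    refine ((hline.sub ((hasDerivAt_id t).mul_const ⟪f' x, y - x⟫)).sub hquad).congr_deriv ?_
    simp only [one_mul, Nat.cast_ofNat]
    ring
  have hψ' : ∀ t ∈ interior (Set.Icc (0 : ℝ) 1),
      ⟪f' (lineMap x y t), y - x⟫ - ⟪f' x, y - x⟫ - L * t * ‖y - x‖ ^ 2 ≤ 0 := by
    intro t ht
    rw [interior_Icc] at ht
    refine sub_nonpos.2 ?_
    have hdist : ‖f' (lineMap x y t) - f' x‖ ≤ L * (t * ‖y - x‖) := by
      simpa [lineMap_apply_module', norm_smul, abs_of_pos ht.1] using hlip (lineMap x y t) x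
    calc ⟪f' (lineMap x y t), y - x⟫ - ⟪f' x, y - x⟫
        = ⟪f' (lineMap x y t) - f' x, y - x⟫ := (inner_sub_left _ _ _).symm
      _ ≤ ‖f' (lineMap x y t) - f' x‖ * ‖y - x‖ := real_inner_le_norm _ _
      _ ≤ L * (t * ‖y - x‖) * ‖y - x‖ := by gcongr
      _ = L * t * ‖y - x‖ ^ 2 := by ring
  have hanti : AntitoneOn ψ (Set.Icc 0 1) :=
    antitoneOn_of_hasDerivWithinAt_nonpos (convex_Icc 0 1)
      (fun t _ => (hψ t).continuousAt.continuousWithinAt)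
      (fun t _ => (hψ t).hasDerivWithinAt) hψ'
  have := hanti (Set.left_mem_Icc.2 zero_le_one) (Set.right_mem_Icc.2 zero_le_one) zero_le_one
  simp only [ψ, lineMap_apply_zero, lineMap_apply_one] at this
  linarith

/-- `y = prox_{g/L}(x - ∇f(x)/L)`, stated as minimality without asserting uniqueness. -/
def IsProxGradStep (f' : E → E) (g : E → ℝ) (L : ℝ) (x y : E) : Prop :=
  ∀ w, 1 / 2 * ‖y - (x - (1 / L) • f' x)‖ ^ 2 + (1 / L) * g y
    ≤ 1 / 2 * ‖w - (x - (1 / L) • f' x)‖ ^ 2 + (1 / L) * g w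

lemma IsProxGradStep.add_sq_dist_le {f g : E → ℝ} {f' : E → E} {L : ℝ} (hL : 0 < L)
    (hf : ConvexOn ℝ Set.univ f) (hgrad : ∀ x, HasGradientAt f (f' x) x)
    (hlip : ∀ x y, ‖f' x - f' y‖ ≤ L * ‖x - y‖) (hg : ConvexOn ℝ Set.univ g) {x y : E}
    (hxy : IsProxGradStep f' g L x y) (z : E) :
    f y + g y + L / 2 * dist y z ^ 2 ≤ f z + g z + L / 2 * dist x z ^ 2 := by
  have hdescent := le_add_inner_add_sq_of_lipschitz_gradient hgrad hlip x y
  have hsupport := hf.add_inner_le_of_hasGradientAt (hgrad x) z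
  have hprox := inner_sub_le_of_forall_half_sq_add_le
    (hg.smul (one_div_pos.2 hL).le) hxy z
  have hprox' : L * ⟪x - y, z - y⟫ - ⟪f' x, z - y⟫ ≤ g z - g y := by
    rw [show x - (1 / L) • f' x - y = (x - y) - (1 / L) • f' x by abel, inner_sub_left,
      real_inner_smul_left] at hprox
    simp only [smul_eq_mul] at hprox
    calc L * ⟪x - y, z - y⟫ - ⟪f' x, z - y⟫
        = L * (⟪x - y, z - y⟫ - 1 / L * ⟪f' x, z - y⟫) := by field_simp
      _ ≤ L * (1 / L * g z - 1 / L * g y) := by gcongr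
      _ = g z - g y := by field_simp
  have hinner : ⟪f' x, z - x⟫ = ⟪f' x, z - y⟫ + ⟪f' x, y - x⟫ := by
    rw [← inner_add_right, sub_add_sub_cancel]
  have hcosine : L / 2 * ‖x - z‖ ^ 2
      = L / 2 * ‖y - x‖ ^ 2 - L * ⟪x - y, z - y⟫ + L / 2 * ‖y - z‖ ^ 2 := by
    rw [← sub_add_sub_cancel x y z, norm_add_sq_real, norm_sub_rev x y, ← neg_sub z y,
      inner_neg_right]
    ring
  rw [dist_eq_norm, dist_eq_norm]
  linarith

end

section

open Metric

variable {X : Type*} [PseudoMetricSpace X] {F : X → ℝ} {T : X → X} {L : ℝ}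

lemma le_infDist_sq {s : Set X} (hs : s.Nonempty) {a : X} {r : ℝ}
    (h : ∀ z ∈ s, r ≤ dist a z ^ 2) : r ≤ infDist a s ^ 2 :=
  (Real.sqrt_le_left infDist_nonneg).1 <|
    (le_infDist hs).2 fun z hz => (Real.sqrt_le_left dist_nonneg).2 (h z hz)

lemma mul_sub_le_of_add_sq_dist_le (hL : 0 ≤ L)
    (hstep : ∀ a z, F (T a) + L / 2 * dist (T a) z ^ 2 ≤ F z + L / 2 * dist a z ^ 2)
    (a z : X) (n : ℕ) : n * (F (T^[n] a) - F z) ≤ L / 2 * dist a z ^ 2 := by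
  suffices h : ∀ m : ℕ,
      m * (F (T^[m] a) - F z) + L / 2 * dist (T^[m] a) z ^ 2 ≤ L / 2 * dist a z ^ 2 by
    nlinarith [h n, sq_nonneg (dist (T^[n] a) z)]
  intro m
  induction m with
  | zero => simp
  | succ m ih =>
    rw [Function.iterate_succ_apply']
    have hdesc : F (T (T^[m] a)) ≤ F (T^[m] a) := by
      have := hstep (T^[m] a) (T^[m] a)
      rw [dist_self] at this
      nlinarith [sq_nonneg (dist (T (T^[m] a)) (T^[m] a))]
    push_cast
    nlinarith [hstep (T^[m] a) z, mul_le_mul_of_nonneg_left hdesc m.cast_nonneg]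

lemma mul_sub_le_infDist_sq (hL : 0 < L)
    (hstep : ∀ a z, F (T a) + L / 2 * dist (T a) z ^ 2 ≤ F z + L / 2 * dist a z ^ 2)
    {s : Set X} (hs : s.Nonempty) {Fstar : ℝ} (hF : ∀ z ∈ s, F z = Fstar) (a : X) (n : ℕ) :
    n * (F (T^[n] a) - Fstar) ≤ L / 2 * infDist a s ^ 2 := by
  rw [← div_le_iff₀' (by positivity)]
  refine le_infDist_sq hs fun z hz => ?_
  rw [div_le_iff₀' (by positivity), ← hF z hz]
  exact mul_sub_le_of_add_sq_dist_le hL.le hstep a z n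

lemma restart_stage_halves_gap {c θ ε Fstar : ℝ} (hL : 0 < L) (hc : 0 < c) (hθ : 0 ≤ θ)
    (hε : 0 < ε)
    (hstep : ∀ a z, F (T a) + L / 2 * dist (T a) z ^ 2 ≤ F z + L / 2 * dist a z ^ 2)
    {s : Set X} (hs : s.Nonempty) (hF : ∀ z ∈ s, F z = Fstar) {a : X}
    (heb : infDist a s ≤ c * (F a - Fstar) ^ θ) (hgap₀ : 0 ≤ F a - Fstar)
    (hgap : F a - Fstar ≤ ε) :
    F (T^[⌈c ^ 2 * L * ε ^ (2 * θ - 1)⌉₊] a) - Fstar ≤ ε / 2 := by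
  set n := ⌈c ^ 2 * L * ε ^ (2 * θ - 1)⌉₊
  have hn : c ^ 2 * L * ε ^ (2 * θ - 1) ≤ n := Nat.le_ceil _
  have hpos : 0 < c ^ 2 * L * ε ^ (2 * θ - 1) := by positivity
  have hdist : infDist a s ≤ c * ε ^ θ := heb.trans (by gcongr)
  have hdist_sq : infDist a s ^ 2 ≤ c ^ 2 * ε ^ (2 * θ - 1) * ε := by
    calc infDist a s ^ 2 ≤ (c * ε ^ θ) ^ 2 := by gcongr; exact infDist_nonneg
      _ = c ^ 2 * ε ^ (2 * θ - 1) * ε := by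
        rw [mul_pow, mul_assoc, ← Real.rpow_add_one hε.ne', ← Real.rpow_natCast (ε ^ θ),
          ← Real.rpow_mul hε.le]
        norm_num [mul_comm]
  have hmul : (n : ℝ) * (F (T^[n] a) - Fstar) ≤ n * (ε / 2) :=
    calc (n : ℝ) * (F (T^[n] a) - Fstar) ≤ L / 2 * infDist a s ^ 2 :=
          mul_sub_le_infDist_sq hL hstep hs hF a n
      _ ≤ L / 2 * (c ^ 2 * ε ^ (2 * θ - 1) * ε) := by gcongr
      _ = c ^ 2 * L * ε ^ (2 * θ - 1) * (ε / 2) := by ring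
      _ ≤ n * (ε / 2) := by gcongr
  exact le_of_mul_le_mul_left hmul (hpos.trans_le hn)

end

theorem restarted_pg_linear_convergence_general {d : ℕ} (L c θ ε₀ : ℝ)
    (hL : 0 < L) (hc : 0 < c) (hε₀ : 0 < ε₀) (hθ : θ ∈ Set.Ioc (0:ℝ) (1/2))
    (f g : EuclideanSpace ℝ (Fin d) → ℝ)
    (f' : EuclideanSpace ℝ (Fin d) → EuclideanSpace ℝ (Fin d))
    (hconvf : ConvexOn ℝ Set.univ f)
    (hgrad : ∀ x, HasGradientAt f (f' x) x)
    (hlip : ∀ x y, ‖f' x - f' y‖ ≤ L * ‖x - y‖)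
    (hconvg : ConvexOn ℝ Set.univ g)
    (T : EuclideanSpace ℝ (Fin d) → EuclideanSpace ℝ (Fin d))
    (hT : ∀ x z, 1 / 2 * ‖T x - (x - (1 / L) • f' x)‖ ^ 2 + (1 / L) * g (T x)
        ≤ 1 / 2 * ‖z - (x - (1 / L) • f' x)‖ ^ 2 + (1 / L) * g z)
    (Ω : Set (EuclideanSpace ℝ (Fin d)))
    (hΩ : Ω = {z | ∀ y, f z + g z ≤ f y + g y}) (hne : Ω.Nonempty)
    (Fstar : ℝ) (hfs : ∀ z ∈ Ω, f z + g z = Fstar)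
    (heb : ∀ x, f x + g x - Fstar ≤ ε₀ →
        Metric.infDist x Ω ≤ c * (f x + g x - Fstar) ^ θ)
    (x : ℕ → EuclideanSpace ℝ (Fin d))
    (h0 : f (x 0) + g (x 0) - Fstar ≤ ε₀)
    (hstage : ∀ k : ℕ, x (k + 1) = T^[⌈c ^ 2 * L * (ε₀ / 2 ^ k) ^ (2 * θ - 1)⌉₊] (x k)) :
    ∀ k : ℕ, f (x k) + g (x k) - Fstar ≤ ε₀ / 2 ^ k := by
  obtain ⟨z₀, hz₀⟩ := hne
  have hmin : ∀ y, f z₀ + g z₀ ≤ f y + g y := by rwa [hΩ] at hz₀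
  have hgap₀ : ∀ y, 0 ≤ f y + g y - Fstar := fun y => by linarith [hmin y, hfs z₀ hz₀]
  have hstep : ∀ a z, f (T a) + g (T a) + L / 2 * dist (T a) z ^ 2
      ≤ f z + g z + L / 2 * dist a z ^ 2 := fun a =>
    IsProxGradStep.add_sq_dist_le hL hconvf hgrad hlip hconvg (hT a)
  intro k
  induction k with
  | zero => simpa using h0
  | succ k ih =>
    have hεk : ε₀ / 2 ^ k ≤ ε₀ := div_le_self hε₀.le (one_le_pow₀ one_le_two)
    rw [hstage k, pow_succ (2 : ℝ), ← div_div]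
    exact restart_stage_halves_gap (F := fun y => f y + g y) hL hc hθ.1.le (by positivity)
      hstep ⟨z₀, hz₀⟩ hfs (heb _ (ih.trans hεk)) (hgap₀ _) ih

theorem restarted_pg_linear_convergence {d : ℕ} (L c θ ε₀ : ℝ)
    (hL : 0 < L) (hc : 0 < c) (hε₀ : 0 < ε₀) (hθ : θ ∈ Set.Ioc (0:ℝ) (1/2))
    (f g : EuclideanSpace ℝ (Fin d) → ℝ)
    (f' : EuclideanSpace ℝ (Fin d) → EuclideanSpace ℝ (Fin d))
    (hconvf : ConvexOn ℝ Set.univ f)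
    (hgrad : ∀ x, HasGradientAt f (f' x) x)
    (hlip : ∀ x y, ‖f' x - f' y‖ ≤ L * ‖x - y‖)
    (hconvg : ConvexOn ℝ Set.univ g) (hlsc : LowerSemicontinuous g)
    (T : EuclideanSpace ℝ (Fin d) → EuclideanSpace ℝ (Fin d))
    (hT : ∀ x z, 1 / 2 * ‖T x - (x - (1 / L) • f' x)‖ ^ 2 + (1 / L) * g (T x)
        ≤ 1 / 2 * ‖z - (x - (1 / L) • f' x)‖ ^ 2 + (1 / L) * g z)
    (Ω : Set (EuclideanSpace ℝ (Fin d)))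
    (hΩ : Ω = {z | ∀ y, f z + g z ≤ f y + g y}) (hne : Ω.Nonempty)
    (Fstar : ℝ) (hfs : ∀ z ∈ Ω, f z + g z = Fstar)
    (heb : ∀ x, f x + g x - Fstar ≤ ε₀ →
        Metric.infDist x Ω ≤ c * (f x + g x - Fstar) ^ θ)
    (x : ℕ → EuclideanSpace ℝ (Fin d))
    (h0 : f (x 0) + g (x 0) - Fstar ≤ ε₀)
    (hstage : ∀ k : ℕ, x (k + 1) = T^[⌈c ^ 2 * L * (ε₀ / 2 ^ k) ^ (2 * θ - 1)⌉₊] (x k)) :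
    ∀ k : ℕ, f (x k) + g (x k) - Fstar ≤ ε₀ / 2 ^ k :=
  restarted_pg_linear_convergence_general L c θ ε₀ hL hc hε₀ hθ f g f' hconvf hgrad hlip hconvg T hT
    Ω hΩ hne Fstar hfs heb x h0 hstage
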